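/- Let D and G be Banach spaces, S : D → G a nonzero bounded linear operator, K ⊆ G* a weak-*-compact set, α an ordinal and ε > 0. Then s_ε^α(S* K) ⊆ S*( s_{ε/(2‖S‖)}^α (K) ), where S* : G* → D* is the adjoint of S. -/

import Mathlib

open NormedSpace Metric
open scoped Ordinal Pointwise

noncomputable section

/-- A subset of the norm dual is weak-* open if it is open when transported to the weak-* dual. -/
def IsWeakStarOpen {E : Type*} [NormedAddCommGroup E] [NormedSpace ℝ E]
    (V : Set (StrongDual ℝ E)) : Prop :=
  IsOpen (StrongDual.toWeakDual '' V : Set (WeakDual ℝ E))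

/-- A subset of the norm dual is weak-* compact if it is compact when transported to the
weak-* dual. -/
def IsWeakStarCompact {E : Type*} [NormedAddCommGroup E] [NormedSpace ℝ E]
    (K : Set (StrongDual ℝ E)) : Prop :=
  IsCompact (StrongDual.toWeakDual '' K : Set (WeakDual ℝ E))

/-- The Szlenk derivation `s_ε(K)`. -/
def szlenkDeriv {E : Type*} [NormedAddCommGroup E] [NormedSpace ℝ E]
    (ε : ℝ) (K : Set (StrongDual ℝ E)) : Set (StrongDual ℝ E) :=
  {x | x ∈ K ∧ ∀ V : Set (StrongDual ℝ E), IsWeakStarOpen V → x ∈ V → ε < Metric.diam (K ∩ V)}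

/-- The transfinite iterates `s_ε^α(K)` of the Szlenk derivation. -/
noncomputable def szlenkIter {E : Type*} [NormedAddCommGroup E] [NormedSpace ℝ E]
    (ε : ℝ) (K : Set (StrongDual ℝ E)) (α : Ordinal) : Set (StrongDual ℝ E) :=
  Ordinal.limitRecOn α K (fun _ S => szlenkDeriv ε S)
    (fun o _ ih => ⋂ (β : Ordinal) (h : β < o), ih β h)

/-- `Sz(K) ≤ γ` : the `γ`-th Szlenk derivative of `K` is empty for every `ε > 0`. -/
def SzLE {E : Type*} [NormedAddCommGroup E] [NormedSpace ℝ E]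
    (K : Set (StrongDual ℝ E)) (γ : Ordinal) : Prop :=
  ∀ ε : ℝ, 0 < ε → szlenkIter ε K γ = ∅

/-- The image of a set under the adjoint of an operator. -/
def adjImage {E F : Type*} [NormedAddCommGroup E] [NormedSpace ℝ E]
    [NormedAddCommGroup F] [NormedSpace ℝ F] (T : E →L[ℝ] F) (K : Set (StrongDual ℝ F)) :
    Set (StrongDual ℝ E) :=
  (fun g : StrongDual ℝ F => g.comp T) '' K

/-- `Sz(T) ≤ γ` for an operator `T`. -/
def SzOpLE {E F : Type*} [NormedAddCommGroup E] [NormedSpace ℝ E]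
    [NormedAddCommGroup F] [NormedSpace ℝ F] (T : E →L[ℝ] F) (γ : Ordinal) : Prop :=
  SzLE (adjImage T (closedBall (0 : StrongDual ℝ F) 1)) γ

/-- `Sz(E) ≤ γ` for a Banach space `E`. -/
def SzSpaceLE (E : Type*) [NormedAddCommGroup E] [NormedSpace ℝ E] (γ : Ordinal) : Prop :=
  SzLE (closedBall (0 : StrongDual ℝ E) 1) γ


section Aux

open Bornology

variable {E F : Type*} [NormedAddCommGroup E] [NormedSpace ℝ E]
  [NormedAddCommGroup F] [NormedSpace ℝ F]

lemma isWeakStarOpen_iff (V : Set (StrongDual ℝ E)) :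
    IsWeakStarOpen V ↔ IsOpen (show Set (WeakDual ℝ E) from V) := by
  unfold IsWeakStarOpen
  congr! 1
  ext x
  constructor
  · rintro ⟨y, hy, rfl⟩; exact hy
  · intro h; exact ⟨x, h, rfl⟩

lemma isWeakStarCompact_iff (K : Set (StrongDual ℝ E)) :
    IsWeakStarCompact K ↔ IsCompact (show Set (WeakDual ℝ E) from K) := by
  unfold IsWeakStarCompact
  congr! 1
  ext x
  constructor
  · rintro ⟨y, hy, rfl⟩; exact hy
  · intro h; exact ⟨x, h, rfl⟩

/-- The adjoint map, regarded as a map between weak-* duals. -/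
def wsAdj (T : E →L[ℝ] F) : WeakDual ℝ F → WeakDual ℝ E :=
  fun g => ContinuousLinearMap.comp (show StrongDual ℝ F from g) T

lemma wsAdj_continuous (T : E →L[ℝ] F) : Continuous (wsAdj T) := by
  apply WeakDual.continuous_of_continuous_eval
  intro y
  exact WeakDual.eval_continuous (T y)

lemma adjImage_eq (T : E →L[ℝ] F) (K : Set (StrongDual ℝ F)) :
    (show Set (WeakDual ℝ E) from adjImage T K) = wsAdj T '' (show Set (WeakDual ℝ F) from K) :=
  rfl

/-- A weak-*-compact subset of the dual of a Banach space is norm-bounded. -/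
lemma isBounded_of_isWeakStarCompact [CompleteSpace E] {K : Set (StrongDual ℝ E)}
    (hK : IsWeakStarCompact K) : IsBounded K := by
  rw [isWeakStarCompact_iff] at hK
  have hpt : ∀ x : E, ∃ C : ℝ, ∀ f : K, ‖(f : StrongDual ℝ E) x‖ ≤ C := by
    intro x
    have hc : IsCompact ((fun f : WeakDual ℝ E => f x) '' (show Set (WeakDual ℝ E) from K)) :=
      hK.image (WeakDual.eval_continuous x)
    obtain ⟨C, hC⟩ := (isBounded_iff_forall_norm_le).1 hc.isBounded
    exact ⟨C, fun f => hC _ ⟨f.1, f.2, rfl⟩⟩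
  obtain ⟨C', hC'⟩ := banach_steinhaus (g := fun f : K => (f : StrongDual ℝ E)) hpt
  rw [isBounded_iff_forall_norm_le]
  exact ⟨C', fun f hf => hC' ⟨f, hf⟩⟩

lemma isBounded_adjImage (T : E →L[ℝ] F) {s : Set (StrongDual ℝ F)} (hs : IsBounded s) :
    IsBounded (adjImage T s) := by
  obtain ⟨C, hC⟩ := isBounded_iff_forall_norm_le.1 hs
  rw [isBounded_iff_forall_norm_le]
  refine ⟨C * ‖T‖ + ‖T‖, ?_⟩
  rintro _ ⟨f, hf, rfl⟩
  calc ‖f.comp T‖ ≤ ‖f‖ * ‖T‖ := ContinuousLinearMap.opNorm_comp_le _ _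
  _ ≤ C * ‖T‖ := by
      have : (0:ℝ) ≤ ‖T‖ := norm_nonneg _
      nlinarith [hC f hf]
  _ ≤ C * ‖T‖ + ‖T‖ := by linarith [norm_nonneg T]

lemma diam_adjImage_le (T : E →L[ℝ] F) {s : Set (StrongDual ℝ F)} (hs : IsBounded s) :
    diam (adjImage T s) ≤ ‖T‖ * diam s := by
  apply diam_le_of_forall_dist_le (by positivity)
  rintro _ ⟨f, hf, rfl⟩ _ ⟨g, hg, rfl⟩
  have h1 : dist (f.comp T) (g.comp T) = ‖(f - g).comp T‖ := by
    rw [dist_eq_norm, ContinuousLinearMap.sub_comp]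
  calc dist (f.comp T) (g.comp T) = ‖(f - g).comp T‖ := h1
  _ ≤ ‖f - g‖ * ‖T‖ := ContinuousLinearMap.opNorm_comp_le _ _
  _ = ‖T‖ * dist f g := by rw [dist_eq_norm]; ring
  _ ≤ ‖T‖ * diam s := by
      have := dist_le_diam_of_mem hs hf hg
      nlinarith [norm_nonneg T]

lemma szlenkDeriv_subset (ε : ℝ) (K : Set (StrongDual ℝ E)) : szlenkDeriv ε K ⊆ K :=
  fun _ hx => hx.1

lemma szlenkDeriv_mono (ε : ℝ) {A B : Set (StrongDual ℝ E)} (hAB : A ⊆ B) (hB : IsBounded B) :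
    szlenkDeriv ε A ⊆ szlenkDeriv ε B := by
  rintro x ⟨hxA, hx⟩
  refine ⟨hAB hxA, fun V hV hxV => ?_⟩
  calc ε < diam (A ∩ V) := hx V hV hxV
  _ ≤ diam (B ∩ V) :=
    diam_mono (Set.inter_subset_inter_left V hAB) (hB.subset Set.inter_subset_left)

lemma isWeakStarCompact_szlenkDeriv (ε : ℝ) {K : Set (StrongDual ℝ E)}
    (hK : IsWeakStarCompact K) : IsWeakStarCompact (szlenkDeriv ε K) := by
  classical
  set U : Set (StrongDual ℝ E) :=
    ⋃ V ∈ {V : Set (StrongDual ℝ E) | IsWeakStarOpen V ∧ diam (K ∩ V) ≤ ε}, V with hUdef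
  have hUopen : IsOpen (show Set (WeakDual ℝ E) from U) := by
    exact isOpen_biUnion fun V hV => (isWeakStarOpen_iff V).1 hV.1
  have heq : szlenkDeriv ε K = K ∩ Uᶜ := by
    ext x
    constructor
    · rintro ⟨hxK, hx⟩
      refine ⟨hxK, fun hxU => ?_⟩
      obtain ⟨V, hV, hxV⟩ := Set.mem_iUnion₂.1 hxU
      exact absurd (hx V hV.1 hxV) (not_lt.2 hV.2)
    · rintro ⟨hxK, hxU⟩
      refine ⟨hxK, fun V hV hxV => ?_⟩
      by_contra h
      exact hxU (Set.mem_iUnion₂.2 ⟨V, ⟨hV, not_lt.1 h⟩, hxV⟩)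
  rw [isWeakStarCompact_iff, heq]
  exact ((isWeakStarCompact_iff K).1 hK).inter_right hUopen.isClosed_compl

lemma szlenkIter_zero (ε : ℝ) (K : Set (StrongDual ℝ E)) : szlenkIter ε K 0 = K :=
  Ordinal.limitRecOn_zero _ _ _

lemma szlenkIter_succ (ε : ℝ) (K : Set (StrongDual ℝ E)) (α : Ordinal) :
    szlenkIter ε K (α + 1) = szlenkDeriv ε (szlenkIter ε K α) :=
  Ordinal.limitRecOn_add_one _ _ _ _

lemma szlenkIter_limit (ε : ℝ) (K : Set (StrongDual ℝ E)) {α : Ordinal} (h : Order.IsSuccLimit α) :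
    szlenkIter ε K α = ⋂ (β : Ordinal) (_ : β < α), szlenkIter ε K β := by
  rw [szlenkIter, Ordinal.limitRecOn_limit _ _ _ _ h]
  rfl

lemma szlenkIter_antitone (ε : ℝ) (K : Set (StrongDual ℝ E)) :
    ∀ α β : Ordinal, β ≤ α → szlenkIter ε K α ⊆ szlenkIter ε K β := by
  intro α
  induction α using Ordinal.limitRecOn with
  | zero =>
      intro β hβ
      rw [nonpos_iff_eq_zero.1 hβ]
  | add_one γ ih =>
      intro β hβ
      rcases eq_or_lt_of_le hβ with rfl | hlt
      · rfl
      · have hβγ : β ≤ γ := Order.lt_add_one_iff.1 hlt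
        rw [szlenkIter_succ]
        exact (szlenkDeriv_subset ε _).trans (ih β hβγ)
  | limit γ hγ _ =>
      intro β hβ
      rcases eq_or_lt_of_le hβ with rfl | hlt
      · rfl
      · rw [szlenkIter_limit ε K hγ]
        exact Set.iInter₂_subset β hlt

lemma szlenkIter_subset (ε : ℝ) (K : Set (StrongDual ℝ E)) (α : Ordinal) :
    szlenkIter ε K α ⊆ K := by
  have := szlenkIter_antitone ε K α 0 (zero_le (a := α))
  rwa [szlenkIter_zero] at this

lemma isWeakStarCompact_szlenkIter (ε : ℝ) {K : Set (StrongDual ℝ E)}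
    (hK : IsWeakStarCompact K) (α : Ordinal) : IsWeakStarCompact (szlenkIter ε K α) := by
  induction α using Ordinal.limitRecOn with
  | zero => rwa [szlenkIter_zero]
  | add_one γ ih => rw [szlenkIter_succ]; exact isWeakStarCompact_szlenkDeriv ε ih
  | limit γ hγ ih =>
      rw [szlenkIter_limit ε K hγ, isWeakStarCompact_iff]
      have hcl : IsClosed (show Set (WeakDual ℝ E) from
          ⋂ (β : Ordinal) (_ : β < γ), szlenkIter ε K β) := by
        exact isClosed_biInter fun β hβ =>
          ((isWeakStarCompact_iff _).1 (ih β hβ)).isClosed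
      refine IsCompact.of_isClosed_subset ((isWeakStarCompact_iff K).1 hK) hcl ?_
      intro x hx
      have hx0 : x ∈ szlenkIter ε K 0 := Set.mem_iInter₂.1 hx 0 hγ.pos
      rwa [szlenkIter_zero] at hx0

/-- One step of the key estimate: `s_ε(T* M) ⊆ T* (s_{ε/(2‖T‖)} M)`. -/
lemma szlenkDeriv_adjImage_subset [CompleteSpace F] (T : E →L[ℝ] F) (hT : T ≠ 0)
    {M : Set (StrongDual ℝ F)} (hM : IsWeakStarCompact M) (ε : ℝ) (hε : 0 < ε) :
    szlenkDeriv ε (adjImage T M) ⊆ adjImage T (szlenkDeriv (ε / (2 * ‖T‖)) M) := by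
  classical
  have hTpos : 0 < ‖T‖ := norm_pos_iff.2 hT
  set ε' : ℝ := ε / (2 * ‖T‖) with hε'def
  have hMbdd : IsBounded M := isBounded_of_isWeakStarCompact hM
  rintro x ⟨hxmem, hxdiam⟩
  by_contra hcon
  -- the fiber of x in M
  set F0 : Set (StrongDual ℝ F) := M ∩ (fun g : StrongDual ℝ F => g.comp T) ⁻¹' {x} with hF0def
  have hF0compact : IsCompact (show Set (WeakDual ℝ F) from F0) := by
    refine ((isWeakStarCompact_iff M).1 hM).inter_right ?_
    exact (isClosed_singleton (x := (show WeakDual ℝ E from x))).preimage (wsAdj_continuous T)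
  -- every point of the fiber has a small neighborhood
  have hsmall : ∀ y ∈ F0, ∃ V : Set (StrongDual ℝ F),
      IsWeakStarOpen V ∧ y ∈ V ∧ diam (M ∩ V) ≤ ε' := by
    rintro y ⟨hyM, hyx⟩
    by_contra h
    push_neg at h
    refine hcon ⟨y, ⟨hyM, fun V hV hyV => ?_⟩, hyx⟩
    exact lt_of_not_ge (fun hle => absurd hle (not_le.2 (h V hV hyV)))
  choose! Vy hVyopen hVymem hVydiam using hsmall
  -- finite subcover of the fiber
  have hcover : (show Set (WeakDual ℝ F) from F0) ⊆
      ⋃ y : F0, (show Set (WeakDual ℝ F) from Vy y) := by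
    intro z hz
    exact Set.mem_iUnion.2 ⟨⟨z, hz⟩, hVymem z hz⟩
  obtain ⟨t, ht⟩ := hF0compact.elim_finite_subcover _
    (fun y : F0 => (isWeakStarOpen_iff (Vy y.1)).1 (hVyopen y.1 y.2)) hcover
  -- the union of the chosen open sets
  set Vun : Set (StrongDual ℝ F) := ⋃ y ∈ t, Vy (y : StrongDual ℝ F) with hVundef
  -- the image of the complement, a weak-* closed set avoiding x
  have hCcompact : IsCompact (show Set (WeakDual ℝ E) from adjImage T (M \ Vun)) := by
    rw [adjImage_eq]
    refine IsCompact.image ?_ (wsAdj_continuous T)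
    have : IsOpen (show Set (WeakDual ℝ F) from Vun) := by
      exact isOpen_biUnion fun y _ => (isWeakStarOpen_iff _).1 (hVyopen y.1 y.2)
    rw [Set.diff_eq]
    exact ((isWeakStarCompact_iff M).1 hM).inter_right this.isClosed_compl
  have hxnot : x ∉ adjImage T (M \ Vun) := by
    rintro ⟨m, ⟨hmM, hmV⟩, hmx⟩
    have hmF0 : m ∈ F0 := ⟨hmM, hmx⟩
    obtain ⟨y, hyt, hmy⟩ := Set.mem_iUnion₂.1 (ht hmF0)
    exact hmV (Set.mem_biUnion hyt hmy)
  have hWopen : IsWeakStarOpen ((adjImage T (M \ Vun))ᶜ) := by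
    rw [isWeakStarOpen_iff]
    exact hCcompact.isClosed.isOpen_compl
  -- the promised big diameter
  have hbig : ε < diam (adjImage T M ∩ (adjImage T (M \ Vun))ᶜ) :=
    hxdiam _ hWopen hxnot
  -- but the diameter is small
  have hsub : adjImage T M ∩ (adjImage T (M \ Vun))ᶜ ⊆
      ⋃ y ∈ t, adjImage T (M ∩ Vy (y : StrongDual ℝ F)) := by
    rintro z ⟨⟨m, hmM, rfl⟩, hznot⟩
    have hmV : m ∈ Vun := by
      by_contra hmV
      exact hznot ⟨m, ⟨hmM, hmV⟩, rfl⟩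
    obtain ⟨y, hy, hmy⟩ := Set.mem_iUnion₂.1 hmV
    exact Set.mem_iUnion₂.2 ⟨y, hy, ⟨m, ⟨hmM, hmy⟩, rfl⟩⟩
  have hdiam_small : ∀ y : F0, diam (adjImage T (M ∩ Vy (y : StrongDual ℝ F))) ≤ ε / 2 := by
    intro y
    calc diam (adjImage T (M ∩ Vy (y : StrongDual ℝ F)))
        ≤ ‖T‖ * diam (M ∩ Vy (y : StrongDual ℝ F)) :=
          diam_adjImage_le T (hMbdd.subset Set.inter_subset_left)
      _ ≤ ‖T‖ * ε' := by
          have := hVydiam y.1 y.2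
          nlinarith
      _ = ε / 2 := by
          rw [hε'def]
          field_simp
  have hxin : ∀ y ∈ t, x ∈ adjImage T (M ∩ Vy (y : StrongDual ℝ F)) := by
    intro y _
    exact ⟨y.1, ⟨y.2.1, hVymem y.1 y.2⟩, y.2.2⟩
  have hbdd : ∀ y : F0, IsBounded (adjImage T (M ∩ Vy (y : StrongDual ℝ F))) :=
    fun y => isBounded_adjImage T (hMbdd.subset Set.inter_subset_left)
  have hdsmall : diam (adjImage T M ∩ (adjImage T (M \ Vun))ᶜ) ≤ ε := by
    apply diam_le_of_forall_dist_le hε.le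
    intro z1 hz1 z2 hz2
    obtain ⟨y1, hy1, hz1'⟩ := Set.mem_iUnion₂.1 (hsub hz1)
    obtain ⟨y2, hy2, hz2'⟩ := Set.mem_iUnion₂.1 (hsub hz2)
    calc dist z1 z2 ≤ dist z1 x + dist x z2 := dist_triangle _ _ _
    _ ≤ ε / 2 + ε / 2 := by
        have h1 := dist_le_diam_of_mem (hbdd y1) hz1' (hxin y1 hy1)
        have h2 := dist_le_diam_of_mem (hbdd y2) (hxin y2 hy2) hz2'
        have := hdiam_small y1
        have := hdiam_small y2
        linarith
    _ = ε := by ring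
  exact absurd hbig (not_lt.2 hdsmall)

end Aux

/-- Let `D` and `G` be Banach spaces, `S : D → G` a nonzero bounded linear operator,
`K ⊆ G*` a weak-*-compact set, `α` an ordinal and `ε > 0`.  Then
`s_ε^α(S* K) ⊆ S* (s_{ε/(2‖S‖)}^α (K))`. -/
theorem szlenkIter_adjImage_subset
    {D G : Type*} [NormedAddCommGroup D] [NormedSpace ℝ D] [CompleteSpace D]
    [NormedAddCommGroup G] [NormedSpace ℝ G] [CompleteSpace G]
    (S : D →L[ℝ] G) (hS : S ≠ 0) (K : Set (StrongDual ℝ G)) (hK : IsWeakStarCompact K)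
    (α : Ordinal) (ε : ℝ) (hε : 0 < ε) :
    szlenkIter ε (adjImage S K) α ⊆ adjImage S (szlenkIter (ε / (2 * ‖S‖)) K α) := by
  classical
  have hSpos : 0 < ‖S‖ := norm_pos_iff.2 hS
  have hKbdd : Bornology.IsBounded K := isBounded_of_isWeakStarCompact hK
  set ε' : ℝ := ε / (2 * ‖S‖) with hε'def
  induction α using Ordinal.limitRecOn with
  | zero => rw [szlenkIter_zero, szlenkIter_zero]
  | add_one γ ih =>
      rw [szlenkIter_succ, szlenkIter_succ]
      refine Set.Subset.trans ?_ (szlenkDeriv_adjImage_subset S hS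
        (isWeakStarCompact_szlenkIter ε' hK γ) ε hε)
      exact szlenkDeriv_mono ε ih
        (isBounded_adjImage S (hKbdd.subset (szlenkIter_subset ε' K γ)))
  | limit γ hγ ih =>
      rw [szlenkIter_limit ε _ hγ, szlenkIter_limit ε' K hγ]
      intro x hx
      have hx' : ∀ β < γ, x ∈ adjImage S (szlenkIter ε' K β) := by
        intro β hβ
        exact ih β hβ (Set.mem_iInter₂.1 hx β hβ)
      set C : {β : Ordinal // β < γ} → Set (WeakDual ℝ G) :=
        fun b => (show Set (WeakDual ℝ G) from
          szlenkIter ε' K b.1 ∩ (fun g : StrongDual ℝ G => g.comp S) ⁻¹' {x}) with hCdef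
      have hCne : ∀ b, (C b).Nonempty := by
        rintro ⟨β, hβ⟩
        obtain ⟨y, hy, hyx⟩ := hx' β hβ
        exact ⟨y, hy, hyx⟩
      have hCc : ∀ b, IsCompact (C b) := by
        rintro ⟨β, hβ⟩
        refine ((isWeakStarCompact_iff _).1 (isWeakStarCompact_szlenkIter ε' hK β)).inter_right ?_
        exact (isClosed_singleton (x := (show WeakDual ℝ D from x))).preimage (wsAdj_continuous S)
      have hCcl : ∀ b, IsClosed (C b) := fun b => (hCc b).isClosed
      have hCdir : Directed (· ⊇ ·) C := by
        rintro ⟨β1, hβ1⟩ ⟨β2, hβ2⟩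
        refine ⟨⟨max β1 β2, max_lt hβ1 hβ2⟩, ?_, ?_⟩
        · exact Set.inter_subset_inter_left _
            (szlenkIter_antitone ε' K (max β1 β2) β1 (le_max_left _ _))
        · exact Set.inter_subset_inter_left _
            (szlenkIter_antitone ε' K (max β1 β2) β2 (le_max_right _ _))
      have hne : Nonempty {β : Ordinal // β < γ} := ⟨⟨0, hγ.pos⟩⟩
      obtain ⟨y, hy⟩ :=
        IsCompact.nonempty_iInter_of_directed_nonempty_isCompact_isClosed C hCdir hCne hCc hCcl
      have hy' : ∀ b : {β : Ordinal // β < γ}, y ∈ C b := Set.mem_iInter.1 hy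
      refine ⟨y, ?_, (hy' ⟨0, hγ.pos⟩).2⟩
      exact Set.mem_iInter₂.2 fun β hβ => (hy' ⟨β, hβ⟩).1
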